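/- arXiv:2405.03792 — 3 statements merged into one kernel-verified Lean document; each statement's English description precedes it below -/
import Mathlib

section
/- Let G be a finite tree (a connected acyclic simple graph) on a vertex set V with |V| ≥ 2, and let A ⊆ V be a set of vertices that contains every leaf of G (i.e., every vertex of degree at most 1 belongs to A). Then the sum of the degrees of the vertices in A satisfies ∑_{v ∈ A} deg(v) ≤ 2·(|A| − 1). -/
/-- Let `G` be a finite tree on a vertex set `V` with `|V| ≥ 2`, and let `A` be a set of
vertices containing every leaf of `G` (every vertex of degree at most 1). Then
`∑_{v ∈ A} deg(v) ≤ 2 (|A| − 1)`. -/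
theorem tree_leaf_degree_sum_bound {V : Type*} [Fintype V] (G : SimpleGraph V)
    [DecidableRel G.Adj] (hG : G.IsTree) (hV : 2 ≤ Fintype.card V)
    (A : Finset V) (hA : ∀ v : V, G.degree v ≤ 1 → v ∈ A) :
    ∑ v ∈ A, G.degree v ≤ 2 * (A.card - 1) := by
  classical
  rcases A.eq_empty_or_nonempty with h | h
  · simp [h]
  have htot : ∑ v : V, G.degree v = 2 * (Fintype.card V - 1) := by
    have := hG.card_edgeFinset
    rw [SimpleGraph.sum_degrees_eq_twice_card_edges]
    omega
  have hsplit : ∑ v ∈ A, G.degree v + ∑ v ∈ Aᶜ, G.degree v = 2 * (Fintype.card V - 1) := by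
    rw [Finset.sum_add_sum_compl, htot]
  have hcomp : 2 * Aᶜ.card ≤ ∑ v ∈ Aᶜ, G.degree v := by
    calc 2 * Aᶜ.card = ∑ _v ∈ Aᶜ, 2 := by rw [Finset.sum_const, smul_eq_mul, mul_comm]
    _ ≤ ∑ v ∈ Aᶜ, G.degree v := by
        refine Finset.sum_le_sum fun v hv => ?_
        by_contra hlt
        exact (Finset.mem_compl.mp hv) (hA v (by omega))
  have hcard : Aᶜ.card = Fintype.card V - A.card := by
    rw [Finset.card_compl]
  have h1 : 1 ≤ A.card := h.card_pos
  have h2 : A.card ≤ Fintype.card V := A.card_le_univ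
  omega
end

section
/- Let p, α, β, rA, b1, b2, rC, rD, cL, cT, costST, costOPT be real numbers with 0 ≤ p ≤ α and rA, b1, b2, rC, rD ≥ 0. Assume: (i) costST ≤ p·cL + β·(b1 + b2) + β·rD; (ii) cL ≤ cT + 2·rC + 2·rD; (iii) cT ≤ costOPT − β·rC − β·rD; and (iv) costOPT ≥ rA + b1 + 2·b2 + β·rC + β·rD. Then costST ≤ α·costOPT + (p − α)·rA + (p + β − α)·b1 + (2p + β − 2α)·b2 + (2p − α·β)·rC + (2p + β − α·β)·rD. -/
/-- Arithmetic content of Lemma 3.12: the bound on the Steiner tree solution in terms of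
`α · costOPT` plus coefficient terms. -/
theorem st_cost_bound (p α β rA b1 b2 rC rD cL cT costST costOPT : ℝ)
    (hp : 0 ≤ p) (hpα : p ≤ α) (hrA : 0 ≤ rA) (hb1 : 0 ≤ b1) (hb2 : 0 ≤ b2)
    (hrC : 0 ≤ rC) (hrD : 0 ≤ rD)
    (hST : costST ≤ p * cL + β * (b1 + b2) + β * rD)
    (hcL : cL ≤ cT + 2 * rC + 2 * rD)
    (hcT : cT ≤ costOPT - β * rC - β * rD)
    (hOPT : costOPT ≥ rA + b1 + 2 * b2 + β * rC + β * rD) :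
    costST ≤ α * costOPT + (p - α) * rA + (p + β - α) * b1 + (2 * p + β - 2 * α) * b2
      + (2 * p - α * β) * rC + (2 * p + β - α * β) * rD := by
  nlinarith [mul_le_mul_of_nonneg_left hcL hp, mul_le_mul_of_nonneg_left hcT hp,
    mul_le_mul_of_nonneg_left hOPT (sub_nonneg.mpr hpα)]
end

section
/- Let p = ln 4 (the natural logarithm of 4), α = 1.7994, β = 1.252, wGW = 0.385, wST = 0.187, wIT = 0.428. Then wGW, wST, wIT ≥ 0, wGW + wST + wIT = 1, and the five coefficient inequalities hold: (I1) (2 − α)·wGW + (p − α)·wST ≤ 0; (I2) (2 − α)·wGW + (p + β − α)·wST + (β − α)·wIT ≤ 0; (I3) (2 − 2α)·wGW + (2p + β − 2α)·wST + β·wIT ≤ 0; (I4) (2 − α·β)·wGW + (2p − α·β)·wST ≤ 0; (I5) (2 − α·β)·wGW + (2p + β − α·β)·wST + (β − α·β)·wIT ≤ 0. -/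
/-- Numerical feasibility: at `p = ln 4`, `α = 1.7994`, `β = 1.252` and weights
`wGW = 0.385`, `wST = 0.187`, `wIT = 0.428`, the weights are nonnegative, sum to `1`,
and the five coefficient inequalities hold. -/
theorem numeric_feasibility :
    let p : ℝ := Real.log 4
    let α : ℝ := 1.7994
    let β : ℝ := 1.252
    let wGW : ℝ := 0.385
    let wST : ℝ := 0.187
    let wIT : ℝ := 0.428
    0 ≤ wGW ∧ 0 ≤ wST ∧ 0 ≤ wIT ∧ wGW + wST + wIT = 1 ∧
    (2 - α) * wGW + (p - α) * wST ≤ 0 ∧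
    (2 - α) * wGW + (p + β - α) * wST + (β - α) * wIT ≤ 0 ∧
    (2 - 2 * α) * wGW + (2 * p + β - 2 * α) * wST + β * wIT ≤ 0 ∧
    (2 - α * β) * wGW + (2 * p - α * β) * wST ≤ 0 ∧
    (2 - α * β) * wGW + (2 * p + β - α * β) * wST + (β - α * β) * wIT ≤ 0 := by
  intro p α β wGW wST wIT
  have h4 : Real.log 4 < 1.3862943616 := by
    have h : (4:ℝ) = 2 ^ 2 := by norm_num
    rw [h, Real.log_pow]
    push_cast
    linarith [Real.log_two_lt_d9]
  refine ⟨by norm_num, by norm_num, by norm_num, by norm_num, ?_, ?_, ?_, ?_, ?_⟩ <;>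
    simp only [p, α, β, wGW, wST, wIT] <;> nlinarith [h4]
end
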